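/- Let A be a d×d real symmetric positive semidefinite matrix, let s ∈ {1,…,d}, let ε ∈ (0,1/3), and let N be a finite subset of S₀^{d−1}(s) such that for every v ∈ S₀^{d−1}(s) there exists u ∈ N with ‖v − u‖₂ ≤ ε and ‖v − u‖₀ ≤ s. Then max_{u∈N} uᵀAu ≤ φ_max(s;A) ≤ (1 − 3ε)^{−1}·max_{u∈N} uᵀAu. -/

import Mathlib

open Real

/-- Number of nonzero coordinates (ℓ₀ "norm"). -/
noncomputable def l0norm {d : ℕ} (v : Fin d → ℝ) : ℕ := {j | v j ≠ 0}.ncard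

/-- Euclidean (ℓ₂) norm. -/
noncomputable def l2norm {d : ℕ} (v : Fin d → ℝ) : ℝ := Real.sqrt (∑ j, (v j) ^ 2)

/-- Quadratic form vᵀ A v. -/
noncomputable def quadForm {d : ℕ} (A : Matrix (Fin d) (Fin d) ℝ) (v : Fin d → ℝ) : ℝ :=
  dotProduct v (A.mulVec v)

/-- Minimum sparse eigenvalue φ_min(s; A). -/
noncomputable def phiMin {d : ℕ} (s : ℕ) (A : Matrix (Fin d) (Fin d) ℝ) : ℝ :=
  sInf ((fun v => quadForm A v / (l2norm v) ^ 2) '' {v : Fin d → ℝ | v ≠ 0 ∧ l0norm v ≤ s})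

/-- Maximum sparse eigenvalue φ_max(s; A). -/
noncomputable def phiMax {d : ℕ} (s : ℕ) (A : Matrix (Fin d) (Fin d) ℝ) : ℝ :=
  sSup ((fun v => quadForm A v / (l2norm v) ^ 2) '' {v : Fin d → ℝ | v ≠ 0 ∧ l0norm v ≤ s})

/-- The sparse unit sphere S₀^{d-1}(s). -/
def sparseSphere (d s : ℕ) : Set (Fin d → ℝ) := {v | l2norm v = 1 ∧ l0norm v ≤ s}

/-!
Write a sparse unit vector as `v = u + w` with `u` in the net, so that `w` is `s`-sparse with
`‖w‖₂ ≤ ε`. Cauchy–Schwarz for the semidefinite form gives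
`vᵀAv ≤ uᵀAu + 2 √(uᵀAu) √(wᵀAw) + wᵀAw ≤ max_N + (2ε + ε²) φ_max ≤ max_N + 3ε φ_max`,
and taking the supremum over `v` yields `(1 - 3ε) φ_max ≤ max_N`.
-/

open Matrix WithLp

section Norms

variable {d : ℕ}

lemma l2norm_eq_norm (v : Fin d → ℝ) : l2norm v = ‖toLp 2 v‖ := by
  simp [l2norm, EuclideanSpace.norm_eq]

lemma l2norm_nonneg (v : Fin d → ℝ) : 0 ≤ l2norm v := Real.sqrt_nonneg _

lemma l2norm_smul (c : ℝ) (v : Fin d → ℝ) : l2norm (c • v) = |c| * l2norm v := by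
  simp [l2norm_eq_norm, norm_smul]

lemma l2norm_pos {v : Fin d → ℝ} (hv : v ≠ 0) : 0 < l2norm v := by
  simpa [l2norm_eq_norm] using hv

lemma l0norm_smul {c : ℝ} (hc : c ≠ 0) (v : Fin d → ℝ) : l0norm (c • v) = l0norm v := by
  simp [l0norm, hc]

end Norms

section QuadForm

variable {d : ℕ} {A : Matrix (Fin d) (Fin d) ℝ}

lemma quadForm_smul (A : Matrix (Fin d) (Fin d) ℝ) (c : ℝ) (v : Fin d → ℝ) :
    quadForm A (c • v) = c ^ 2 * quadForm A v := by
  simp only [quadForm, mulVec_smul, dotProduct_smul, smul_dotProduct, smul_eq_mul]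
  ring

lemma quadForm_nonneg (hA : A.PosSemidef) (v : Fin d → ℝ) : 0 ≤ quadForm A v :=
  hA.dotProduct_mulVec_nonneg v

lemma dotProduct_mulVec_comm (hA : A.IsSymm) (u w : Fin d → ℝ) :
    w ⬝ᵥ A *ᵥ u = u ⬝ᵥ A *ᵥ w := by
  rw [dotProduct_mulVec, ← mulVec_transpose, hA.eq, dotProduct_comm]

lemma quadForm_add (hA : A.IsSymm) (u w : Fin d → ℝ) :
    quadForm A (u + w) = quadForm A u + 2 * (u ⬝ᵥ A *ᵥ w) + quadForm A w := by
  simp only [quadForm, mulVec_add, add_dotProduct, dotProduct_add, dotProduct_mulVec_comm hA u w]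
  ring

lemma dotProduct_mulVec_le_sqrt_mul_sqrt (hA : A.PosSemidef) (u w : Fin d → ℝ) :
    u ⬝ᵥ A *ᵥ w ≤ √(quadForm A u) * √(quadForm A w) := by
  have hcs := A.toBilin'.apply_mul_apply_le_of_forall_zero_le
    (fun x => (toBilin'_apply' A x x).symm ▸ quadForm_nonneg hA x) u w
  rw [toBilin'_apply', toBilin'_apply', toBilin'_apply', toBilin'_apply',
    dotProduct_mulVec_comm (isHermitian_iff_isSymm.1 hA.isHermitian) u w] at hcs
  rw [← Real.sqrt_mul (quadForm_nonneg hA u)]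
  exact (le_abs_self _).trans (Real.abs_le_sqrt (by rw [sq]; exact hcs))

lemma quadForm_div_l2norm_sq_eq_rayleighQuotient (A : Matrix (Fin d) (Fin d) ℝ) (v : Fin d → ℝ) :
    quadForm A v / l2norm v ^ 2 = (toEuclideanCLM (𝕜 := ℝ) A).rayleighQuotient (toLp 2 v) := by
  rw [ContinuousLinearMap.rayleighQuotient, ContinuousLinearMap.reApplyInnerSelf_apply,
    real_inner_comm, inner_toEuclideanCLM, l2norm_eq_norm]
  rfl

end QuadForm

section SparseEigenvalue

variable {d s : ℕ} {A : Matrix (Fin d) (Fin d) ℝ}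

lemma bddAbove_image_quadForm_div_l2norm_sq (A : Matrix (Fin d) (Fin d) ℝ) (s : ℕ) :
    BddAbove ((fun v => quadForm A v / l2norm v ^ 2) '' {v : Fin d → ℝ | v ≠ 0 ∧ l0norm v ≤ s}) :=
  ⟨‖toEuclideanCLM (𝕜 := ℝ) A‖, by
    rintro _ ⟨v, -, rfl⟩
    exact (quadForm_div_l2norm_sq_eq_rayleighQuotient A v).trans_le <|
      (le_abs_self _).trans (ContinuousLinearMap.rayleighQuotient_le_norm _ _)⟩

lemma phiMax_nonneg (hA : A.PosSemidef) : 0 ≤ phiMax s A :=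
  Real.sSup_nonneg <| by
    rintro _ ⟨v, -, rfl⟩
    exact div_nonneg (quadForm_nonneg hA v) (sq_nonneg _)

lemma quadForm_le_phiMax_mul_sq {v : Fin d → ℝ} (hv : l0norm v ≤ s) :
    quadForm A v ≤ phiMax s A * l2norm v ^ 2 := by
  obtain rfl | hv0 := eq_or_ne v 0
  · simp [quadForm, l2norm]
  rw [← div_le_iff₀ (pow_pos (l2norm_pos hv0) 2)]
  exact le_csSup (bddAbove_image_quadForm_div_l2norm_sq A s) ⟨v, ⟨hv0, hv⟩, rfl⟩

lemma quadForm_le_phiMax {v : Fin d → ℝ} (hv : v ∈ sparseSphere d s) :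
    quadForm A v ≤ phiMax s A := by
  simpa [hv.1] using quadForm_le_phiMax_mul_sq (A := A) hv.2

lemma phiMax_le {a : ℝ} (ha : 0 ≤ a) (h : ∀ v ∈ sparseSphere d s, quadForm A v ≤ a) :
    phiMax s A ≤ a := by
  refine Real.sSup_le ?_ ha
  rintro _ ⟨v, ⟨hv0, hvs⟩, rfl⟩
  have hc : (l2norm v)⁻¹ ≠ 0 := inv_ne_zero (l2norm_pos hv0).ne'
  have hunit : (l2norm v)⁻¹ • v ∈ sparseSphere d s := by
    refine ⟨?_, (l0norm_smul hc v).trans_le hvs⟩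
    rw [l2norm_smul, abs_inv, abs_of_nonneg (l2norm_nonneg v), inv_mul_cancel₀ (l2norm_pos hv0).ne']
  calc quadForm A v / l2norm v ^ 2 = quadForm A ((l2norm v)⁻¹ • v) := by
        rw [quadForm_smul, inv_pow, inv_mul_eq_div]
    _ ≤ a := h _ hunit

lemma quadForm_le_add_of_l0norm_sub_le (hA : A.PosSemidef) {u v : Fin d → ℝ}
    (hu : u ∈ sparseSphere d s) (hvu : l0norm (v - u) ≤ s) :
    quadForm A v ≤ quadForm A u + (2 * l2norm (v - u) + l2norm (v - u) ^ 2) * phiMax s A := by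
  set r := l2norm (v - u)
  set P := phiMax s A
  have hP : 0 ≤ P := phiMax_nonneg hA
  have hw : quadForm A (v - u) ≤ P * r ^ 2 := quadForm_le_phiMax_mul_sq hvu
  have hcross : u ⬝ᵥ A *ᵥ (v - u) ≤ r * P :=
    calc u ⬝ᵥ A *ᵥ (v - u) ≤ √(quadForm A u) * √(quadForm A (v - u)) :=
          dotProduct_mulVec_le_sqrt_mul_sqrt hA u (v - u)
      _ ≤ √P * √(P * r ^ 2) := by
          gcongr
          exact quadForm_le_phiMax hu
      _ = r * P := by
          rw [Real.sqrt_mul hP, Real.sqrt_sq (l2norm_nonneg _), ← mul_assoc, Real.mul_self_sqrt hP,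
            mul_comm]
  calc quadForm A v = quadForm A (u + (v - u)) := by rw [add_sub_cancel]
    _ = quadForm A u + 2 * (u ⬝ᵥ A *ᵥ (v - u)) + quadForm A (v - u) :=
        quadForm_add (isHermitian_iff_isSymm.1 hA.isHermitian) u (v - u)
    _ ≤ quadForm A u + (2 * r + r ^ 2) * P := by nlinarith

end SparseEigenvalue

theorem max_sparse_eigen_on_net_general {d : ℕ} (s : ℕ)
    (A : Matrix (Fin d) (Fin d) ℝ) (hA : A.PosSemidef)
    (ε : ℝ) (hε0 : 0 < ε) (hε1 : ε < 1/3)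
    (N : Finset (Fin d → ℝ)) (hNsub : ↑N ⊆ sparseSphere d s)
    (hnet : ∀ v ∈ sparseSphere d s, ∃ u ∈ N, l2norm (v - u) ≤ ε ∧ l0norm (v - u) ≤ s) :
    sSup ((fun u => quadForm A u) '' ↑N) ≤ phiMax s A ∧
      phiMax s A ≤ (1 - 3 * ε)⁻¹ * sSup ((fun u => quadForm A u) '' ↑N) := by
  set M := sSup ((fun u => quadForm A u) '' ↑N)
  set P := phiMax s A
  have hP : 0 ≤ P := phiMax_nonneg hA
  have hM : 0 ≤ M := Real.sSup_nonneg <| by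
    rintro _ ⟨u, -, rfl⟩
    exact quadForm_nonneg hA u
  have hle_M : ∀ u ∈ N, quadForm A u ≤ M := fun u hu =>
    le_csSup (N.finite_toSet.image _).bddAbove ⟨u, hu, rfl⟩
  refine ⟨Real.sSup_le (by rintro _ ⟨u, hu, rfl⟩; exact quadForm_le_phiMax (hNsub hu)) hP, ?_⟩
  have hPM : P ≤ M + 3 * ε * P := phiMax_le (by positivity) fun v hv => by
    obtain ⟨u, hu, hdist, hsparse⟩ := hnet v hv
    have hr := l2norm_nonneg (v - u)
    calc quadForm A v
        ≤ quadForm A u + (2 * l2norm (v - u) + l2norm (v - u) ^ 2) * P :=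
          quadForm_le_add_of_l0norm_sub_le hA (hNsub hu) hsparse
      _ ≤ M + 3 * ε * P := by
          have hcoef : 2 * l2norm (v - u) + l2norm (v - u) ^ 2 ≤ 3 * ε := by nlinarith
          exact add_le_add (hle_M u hu) (mul_le_mul_of_nonneg_right hcoef hP)
  rw [← div_eq_inv_mul, le_div_iff₀ (by linarith)]
  linarith

/-- maximum sparse eigenvalue is controlled by its values on a greedy ε-net. -/
theorem max_sparse_eigen_on_net {d : ℕ} (s : ℕ) (hs1 : 1 ≤ s) (hsd : s ≤ d)
    (A : Matrix (Fin d) (Fin d) ℝ) (hA : A.PosSemidef)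
    (ε : ℝ) (hε0 : 0 < ε) (hε1 : ε < 1/3)
    (N : Finset (Fin d → ℝ)) (hNsub : ↑N ⊆ sparseSphere d s)
    (hnet : ∀ v ∈ sparseSphere d s, ∃ u ∈ N, l2norm (v - u) ≤ ε ∧ l0norm (v - u) ≤ s) :
    sSup ((fun u => quadForm A u) '' ↑N) ≤ phiMax s A ∧
      phiMax s A ≤ (1 - 3 * ε)⁻¹ * sSup ((fun u => quadForm A u) '' ↑N) :=
  max_sparse_eigen_on_net_general s A hA ε hε0 hε1 N hNsub hnet
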